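/- Fix a, b > 0. For every x ∈ (0, a), the gradient of ψ_{a,b} at the boundary point (x, γ_{a,b}(x)) is tangent to the boundary curve: ∂₂ψ_{a,b}(x, γ_{a,b}(x)) = γ_{a,b}'(x) · ∂₁ψ_{a,b}(x, γ_{a,b}(x)). Equivalently, the normal derivative of ψ_{a,b} along the Neumann line {(x, γ_{a,b}(x)) : 0 < x < a} vanishes. -/

import Mathlib

open Real

/-- The boundary curve of the star-like Neumann domain. -/
noncomputable def gammaAB (a b x : ℝ) : ℝ :=
  (2 * b / π) * arcsin (cos (π * x / (2 * a)) ^ ((a / b) ^ 2))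

/-- The torus eigenfunction restricted to the star-like Neumann domain. -/
noncomputable def psiAB (a b : ℝ) (p : ℝ × ℝ) : ℝ :=
  2 * sin (π * p.1 / (2 * a)) * cos (π * p.2 / (2 * b))

/-!
Write `c = cos (π x / 2a)`, `k = (a / b)²` and `u = c ^ k`. By construction of `γ = gammaAB a b`,
`sin (π γ / 2b) = u` and `cos (π γ / 2b) = √(1 - u²)`, so `∂₂ψ(x, γ x) = -(π / b) sin (π x / 2a) u`.
The chain rule gives `γ' x = -(a / b) sin (π x / 2a) c ^ (k - 1) / √(1 - u²)`, where the factor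
`a / b = b k / a` is the one place where the exponent `k` matters, and multiplying by
`∂₁ψ(x, γ x) = (π / a) c √(1 - u²)` gives the same value.
-/

section

variable (a b : ℝ)

theorem hasDerivAt_psiAB_fst (s y : ℝ) :
    HasDerivAt (fun s => psiAB a b (s, y))
      (π / a * cos (π * s / (2 * a)) * cos (π * y / (2 * b))) s :=
  ((((hasDerivAt_id' s).const_mul π).div_const (2 * a)).sin.const_mul 2).mul_const
    (cos (π * y / (2 * b))) |>.congr_deriv (by ring)

theorem hasDerivAt_psiAB_snd (x t : ℝ) :
    HasDerivAt (fun t => psiAB a b (x, t))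
      (-(π / b) * sin (π * x / (2 * a)) * sin (π * t / (2 * b))) t :=
  (((hasDerivAt_id' t).const_mul π).div_const (2 * b)).cos.const_mul
    (2 * sin (π * x / (2 * a))) |>.congr_deriv (by ring)

theorem pi_mul_gammaAB_div (hb : b ≠ 0) (x : ℝ) :
    π * gammaAB a b x / (2 * b) = arcsin (cos (π * x / (2 * a)) ^ ((a / b) ^ 2)) := by
  rw [gammaAB]
  field_simp

theorem hasDerivAt_gammaAB (ha : a ≠ 0) (hb : b ≠ 0) {x : ℝ} (hc : 0 < cos (π * x / (2 * a)))
    (hu : cos (π * x / (2 * a)) ^ ((a / b) ^ 2) < 1) :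
    HasDerivAt (gammaAB a b)
      (-(a / b) * sin (π * x / (2 * a)) * cos (π * x / (2 * a)) ^ ((a / b) ^ 2 - 1) /
        √(1 - (cos (π * x / (2 * a)) ^ ((a / b) ^ 2)) ^ 2)) x := by
  have hu₀ : cos (π * x / (2 * a)) ^ ((a / b) ^ 2) ≠ -1 := by
    linarith [rpow_pos_of_pos hc ((a / b) ^ 2)]
  have hθ := ((hasDerivAt_id' x).const_mul π).div_const (2 * a)
  refine (((hasDerivAt_arcsin hu₀ hu.ne).comp x
    (hθ.cos.rpow_const (p := (a / b) ^ 2) (Or.inl hc.ne'))).const_mul (2 * b / π)).congr_deriv ?_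
  field_simp

theorem cos_mem_Ioo_of_mem_Ioo {x : ℝ} (hx : x ∈ Set.Ioo 0 a) :
    cos (π * x / (2 * a)) ∈ Set.Ioo 0 1 := by
  obtain ⟨hx0, hxa⟩ := hx
  have ha : 0 < a := hx0.trans hxa
  have hθ : π * x / (2 * a) ∈ Set.Ioo 0 (π / 2) := by
    constructor
    · positivity
    · rw [div_lt_div_iff₀ (by linarith) two_pos]
      nlinarith [pi_pos]
  exact ⟨cos_pos_of_mem_Ioo ⟨by linarith [hθ.1, pi_pos], hθ.2⟩,
    (cos_lt_cos_of_nonneg_of_le_pi le_rfl (by linarith [pi_pos, hθ.2]) hθ.1).trans_eq cos_zero⟩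

end

theorem gradient_tangent_to_boundary (a b : ℝ) (ha : 0 < a) (hb : 0 < b) :
    ∀ x ∈ Set.Ioo (0 : ℝ) a,
      deriv (fun t => psiAB a b (x, t)) (gammaAB a b x) =
        deriv (gammaAB a b) x * deriv (fun t => psiAB a b (t, gammaAB a b x)) x := by
  intro x hx
  obtain ⟨hc₀, hc₁⟩ := cos_mem_Ioo_of_mem_Ioo a hx
  have hu₀ := rpow_pos_of_pos hc₀ ((a / b) ^ 2)
  have hu₁ : cos (π * x / (2 * a)) ^ ((a / b) ^ 2) < 1 := rpow_lt_one hc₀.le hc₁ (by positivity)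
  rw [(hasDerivAt_psiAB_snd a b x _).deriv, (hasDerivAt_psiAB_fst a b x _).deriv,
    (hasDerivAt_gammaAB a b ha.ne' hb.ne' hc₀ hu₁).deriv, pi_mul_gammaAB_div a b hb.ne',
    sin_arcsin (by linarith) hu₁.le, cos_arcsin, rpow_sub_one hc₀.ne']
  generalize cos (π * x / (2 * a)) ^ ((a / b) ^ 2) = u at hu₀ hu₁ ⊢
  have hsqrt : 0 < √(1 - u ^ 2) := sqrt_pos.2 (by nlinarith)
  field_simp
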